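/- Local soundness: each rule of the sequent system LRLL̂_L is sound for the language model, i.e. for each inference step with conclusion Γ → Δ and premisses Γ₁ → Δ₁, …, Γ_n → Δ_n, if L(⋂Γ_i) ⊆ L(ΣΔ_i) for all i = 1,…,n then L(⋂Γ) ⊆ L(ΣΔ). -/
import Mathlib


namespace RLL

/-- Right-linear lattice (RLL) expressions over alphabet `𝒜`, with de Bruijn variables. -/
inductive Expr (𝒜 : Type) : Type
  | var : ℕ → Expr 𝒜
  | letter : 𝒜 → Expr 𝒜 → Expr 𝒜
  | zero : Expr 𝒜
  | plus : Expr 𝒜 → Expr 𝒜 → Expr 𝒜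
  | top : Expr 𝒜
  | inter : Expr 𝒜 → Expr 𝒜 → Expr 𝒜
  | mu : Expr 𝒜 → Expr 𝒜
  | nu : Expr 𝒜 → Expr 𝒜
  deriving DecidableEq

namespace Expr

variable {𝒜 : Type}

/-- Renaming of de Bruijn variables. -/
def rename (f : ℕ → ℕ) : Expr 𝒜 → Expr 𝒜
  | var n => var (f n)
  | letter a e => letter a (rename f e)
  | zero => zero
  | plus e g => plus (rename f e) (rename f g)
  | top => top
  | inter e g => inter (rename f e) (rename f g)
  | mu e => mu (rename (fun n => match n with | 0 => 0 | m + 1 => f m + 1) e)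
  | nu e => nu (rename (fun n => match n with | 0 => 0 | m + 1 => f m + 1) e)

/-- Simultaneous substitution. -/
def subst (σ : ℕ → Expr 𝒜) : Expr 𝒜 → Expr 𝒜
  | var n => σ n
  | letter a e => letter a (subst σ e)
  | zero => zero
  | plus e g => plus (subst σ e) (subst σ g)
  | top => top
  | inter e g => inter (subst σ e) (subst σ g)
  | mu e => mu (subst (fun n => match n with | 0 => var 0 | m + 1 => rename Nat.succ (σ m)) e)
  | nu e => nu (subst (fun n => match n with | 0 => var 0 | m + 1 => rename Nat.succ (σ m)) e)

/-- Substitute `f` for the variable with de Bruijn index `0` (used for unfolding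
fixed points: `σX e(X) ↦ e(σX e(X))`). -/
def subst0 (f : Expr 𝒜) (e : Expr 𝒜) : Expr 𝒜 :=
  subst (fun n => match n with | 0 => f | m + 1 => var m) e

/-- All free variables of `e` are `< n`. -/
def ClosedUnder : Expr 𝒜 → ℕ → Prop
  | var m, n => m < n
  | letter _ e, n => ClosedUnder e n
  | zero, _ => True
  | plus e f, n => ClosedUnder e n ∧ ClosedUnder f n
  | top, _ => True
  | inter e f, n => ClosedUnder e n ∧ ClosedUnder f n
  | mu e, n => ClosedUnder e (n + 1)
  | nu e, n => ClosedUnder e (n + 1)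

/-- `e` has no free variables. -/
def Closed (e : Expr 𝒜) : Prop := ClosedUnder e 0

/-- `GuardedIn e U` : no variable of `U` occurs in `e` outside the scope of a letter `a·`,
and every variable bound in `e` is separated from its binder by a letter.  -/
def GuardedIn : Expr 𝒜 → Set ℕ → Prop
  | var n, U => n ∉ U
  | letter _ e, _ => GuardedIn e ∅
  | zero, _ => True
  | plus e f, U => GuardedIn e U ∧ GuardedIn f U
  | top, _ => True
  | inter e f, U => GuardedIn e U ∧ GuardedIn f U
  | mu e, U => GuardedIn e (insert 0 ((· + 1) '' U))
  | nu e, U => GuardedIn e (insert 0 ((· + 1) '' U))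

/-- A (closed) expression is guarded if each of its variable occurrences occurs free
in a subexpression of the form `a·f`. -/
def Guarded (e : Expr 𝒜) : Prop := GuardedIn e ∅

/-- The size of an expression. -/
def size : Expr 𝒜 → ℕ
  | var _ => 1
  | letter _ e => size e + 1
  | zero => 1
  | plus e f => size e + size f + 1
  | top => 1
  | inter e f => size e + size f + 1
  | mu e => size e + 1
  | nu e => size e + 1

end Expr

/-- ω-words over `𝒜`. -/
abbrev Word (𝒜 : Type) := ℕ → 𝒜

/-- ω-languages over `𝒜`. -/
abbrev OLang (𝒜 : Type) := Set (Word 𝒜)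

variable {𝒜 : Type}

/-- The tail of an ω-word. -/
def wtail (w : Word 𝒜) : Word 𝒜 := fun n => w (n + 1)

/-- Prepend a letter to an ω-word. -/
def wcons (a : 𝒜) (w : Word 𝒜) : Word 𝒜 := fun n => match n with | 0 => a | m + 1 => w m

/-- Extend an environment (interpretation of de Bruijn variables) by a language for
variable `0`. -/
def consEnv (A : OLang 𝒜) (ρ : ℕ → OLang 𝒜) : ℕ → OLang 𝒜 :=
  fun n => match n with | 0 => A | m + 1 => ρ m

/-- The language semantics of RLL expressions, relative to an environment interpreting
free variables (this corresponds to admitting languages as constants).  `μ` and `ν` are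
interpreted via the Knaster–Tarski characterisation of least and greatest fixed points. -/
def lang (ρ : ℕ → OLang 𝒜) : Expr 𝒜 → OLang 𝒜
  | Expr.var n => ρ n
  | Expr.letter a e => {w | w 0 = a ∧ wtail w ∈ lang ρ e}
  | Expr.zero => ∅
  | Expr.plus e f => lang ρ e ∪ lang ρ f
  | Expr.top => Set.univ
  | Expr.inter e f => lang ρ e ∩ lang ρ f
  | Expr.mu e => ⋂₀ {A : OLang 𝒜 | lang (consEnv A ρ) e ⊆ A}
  | Expr.nu e => ⋃₀ {A : OLang 𝒜 | A ⊆ lang (consEnv A ρ) e}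

/-- The language of a (closed) expression. -/
def Lang0 (e : Expr 𝒜) : OLang 𝒜 := lang (fun _ => ∅) e

/-- The Fischer–Ladner relation `→_FL`. -/
inductive FLStep : Expr 𝒜 → Expr 𝒜 → Prop
  | letter (a : 𝒜) (e : Expr 𝒜) : FLStep (Expr.letter a e) e
  | plusL (e f : Expr 𝒜) : FLStep (Expr.plus e f) e
  | plusR (e f : Expr 𝒜) : FLStep (Expr.plus e f) f
  | interL (e f : Expr 𝒜) : FLStep (Expr.inter e f) e
  | interR (e f : Expr 𝒜) : FLStep (Expr.inter e f) f
  | mu (e : Expr 𝒜) : FLStep (Expr.mu e) (Expr.subst0 (Expr.mu e) e)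
  | nu (e : Expr 𝒜) : FLStep (Expr.nu e) (Expr.subst0 (Expr.nu e) e)

/-- `f ≤_FL e` : the reflexive-transitive closure of `→_FL`. -/
def FLle (f e : Expr 𝒜) : Prop := Relation.ReflTransGen FLStep e f

/-- The Fischer–Ladner closure of `e`. -/
def FL (e : Expr 𝒜) : Set (Expr 𝒜) := {f | FLle f e}

/-- `f <_FL e`. -/
def FLlt (f e : Expr 𝒜) : Prop := FLle f e ∧ ¬ FLle e f

/-- Immediate (strict) subformula relation: `SubStep e f` iff `e` is an immediate
subexpression of `f`. -/
inductive SubStep : Expr 𝒜 → Expr 𝒜 → Prop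
  | letter (a : 𝒜) (e : Expr 𝒜) : SubStep e (Expr.letter a e)
  | plusL (e f : Expr 𝒜) : SubStep e (Expr.plus e f)
  | plusR (e f : Expr 𝒜) : SubStep f (Expr.plus e f)
  | interL (e f : Expr 𝒜) : SubStep e (Expr.inter e f)
  | interR (e f : Expr 𝒜) : SubStep f (Expr.inter e f)
  | mu (e : Expr 𝒜) : SubStep e (Expr.mu e)
  | nu (e : Expr 𝒜) : SubStep e (Expr.nu e)

/-- The subformula order `e ⊑ f`. -/
def Subformula (e f : Expr 𝒜) : Prop := Relation.ReflTransGen SubStep e f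

/-- `e` is a `μ`-formula. -/
def IsMu (e : Expr 𝒜) : Prop := ∃ f, e = Expr.mu f

/-- `e` is a `ν`-formula. -/
def IsNu (e : Expr 𝒜) : Prop := ∃ f, e = Expr.nu f

/-- `x` occurs infinitely often in the sequence `t`. -/
def InfOcc {α : Type*} (t : ℕ → α) (x : α) : Prop := ∀ N, ∃ n, N ≤ n ∧ t n = x

end RLL
namespace RLL

variable {𝒜 : Type} [Fintype 𝒜] [DecidableEq 𝒜]

/-- A sequent `Γ → Δ` : a pair of finite sets of expressions. -/
abbrev Sequent (𝒜 : Type) [DecidableEq 𝒜] := Finset (Expr 𝒜) × Finset (Expr 𝒜)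

/-- Inference steps of the system `LRLL̂_L`. -/
inductive Step (𝒜 : Type) [Fintype 𝒜] [DecidableEq 𝒜] : Type
  /-- the axiom `Γ, ae, bf → Δ`, for `a ≠ b` -/
  | axPart (Γ Δ : Finset (Expr 𝒜)) (a b : 𝒜) (e f : Expr 𝒜) (hab : a ≠ b)
  /-- the rule `h_a` : from `Γ → Δ` derive `aΓ → aΔ` (`Γ ≠ ∅`) -/
  | hmod (a : 𝒜) (Γ Δ : Finset (Expr 𝒜)) (hne : Γ.Nonempty)
  /-- the rule `p-r` : from the premisses `→ Γ_a` (`a ∈ 𝒜`) derive `→ {aΓ_a}_{a∈𝒜}` -/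
  | partR (Γs : 𝒜 → Finset (Expr 𝒜))
  /-- left weakening -/
  | weakL (Γ Δ : Finset (Expr 𝒜)) (e : Expr 𝒜)
  /-- right weakening -/
  | weakR (Γ Δ : Finset (Expr 𝒜)) (e : Expr 𝒜)
  | zeroL (Γ Δ : Finset (Expr 𝒜))
  | plusL (Γ Δ : Finset (Expr 𝒜)) (e f : Expr 𝒜)
  | topL (Γ Δ : Finset (Expr 𝒜))
  | interL (Γ Δ : Finset (Expr 𝒜)) (e f : Expr 𝒜)
  | muL (Γ Δ : Finset (Expr 𝒜)) (e : Expr 𝒜)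
  | nuL (Γ Δ : Finset (Expr 𝒜)) (e : Expr 𝒜)
  | zeroR (Γ Δ : Finset (Expr 𝒜))
  | plusR (Γ Δ : Finset (Expr 𝒜)) (e f : Expr 𝒜)
  | topR (Γ Δ : Finset (Expr 𝒜))
  | interR (Γ Δ : Finset (Expr 𝒜)) (e f : Expr 𝒜)
  | muR (Γ Δ : Finset (Expr 𝒜)) (e : Expr 𝒜)
  | nuR (Γ Δ : Finset (Expr 𝒜)) (e : Expr 𝒜)

namespace Step

/-- The conclusion of an inference step. -/
def concl : Step 𝒜 → Sequent 𝒜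
  | axPart Γ Δ a b e f _ => (insert (Expr.letter a e) (insert (Expr.letter b f) Γ), Δ)
  | hmod a Γ Δ _ => (Γ.image (Expr.letter a), Δ.image (Expr.letter a))
  | partR Γs => (∅, Finset.univ.biUnion fun a => (Γs a).image (Expr.letter a))
  | weakL Γ Δ e => (insert e Γ, Δ)
  | weakR Γ Δ e => (Γ, insert e Δ)
  | zeroL Γ Δ => (insert Expr.zero Γ, Δ)
  | plusL Γ Δ e f => (insert (Expr.plus e f) Γ, Δ)
  | topL Γ Δ => (insert Expr.top Γ, Δ)
  | interL Γ Δ e f => (insert (Expr.inter e f) Γ, Δ)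
  | muL Γ Δ e => (insert (Expr.mu e) Γ, Δ)
  | nuL Γ Δ e => (insert (Expr.nu e) Γ, Δ)
  | zeroR Γ Δ => (Γ, insert Expr.zero Δ)
  | plusR Γ Δ e f => (Γ, insert (Expr.plus e f) Δ)
  | topR Γ Δ => (Γ, insert Expr.top Δ)
  | interR Γ Δ e f => (Γ, insert (Expr.inter e f) Δ)
  | muR Γ Δ e => (Γ, insert (Expr.mu e) Δ)
  | nuR Γ Δ e => (Γ, insert (Expr.nu e) Δ)

/-- The list of premisses of an inference step. -/
noncomputable def prems : Step 𝒜 → List (Sequent 𝒜)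
  | axPart _ _ _ _ _ _ _ => []
  | hmod _ Γ Δ _ => [(Γ, Δ)]
  | partR Γs => Finset.univ.toList.map fun a => ((∅ : Finset (Expr 𝒜)), Γs a)
  | weakL Γ Δ _ => [(Γ, Δ)]
  | weakR Γ Δ _ => [(Γ, Δ)]
  | zeroL _ _ => []
  | plusL Γ Δ e f => [(insert e Γ, Δ), (insert f Γ, Δ)]
  | topL Γ Δ => [(Γ, Δ)]
  | interL Γ Δ e f => [(insert e (insert f Γ), Δ)]
  | muL Γ Δ e => [(insert (Expr.subst0 (Expr.mu e) e) Γ, Δ)]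
  | nuL Γ Δ e => [(insert (Expr.subst0 (Expr.nu e) e) Γ, Δ)]
  | zeroR Γ Δ => [(Γ, Δ)]
  | plusR Γ Δ e f => [(Γ, insert e (insert f Δ))]
  | topR _ _ => []
  | interR Γ Δ e f => [(Γ, insert e Δ), (Γ, insert f Δ)]
  | muR Γ Δ e => [(Γ, insert (Expr.subst0 (Expr.mu e) e) Δ)]
  | nuR Γ Δ e => [(Γ, insert (Expr.subst0 (Expr.nu e) e) Δ)]

/-- The principal formula (with its side: `false` = LHS, `true` = RHS) of a structural
or logical step. -/
def principal : Step 𝒜 → Option (Bool × Expr 𝒜)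
  | weakL _ _ e => some (false, e)
  | weakR _ _ e => some (true, e)
  | zeroL _ _ => some (false, Expr.zero)
  | plusL _ _ e f => some (false, Expr.plus e f)
  | topL _ _ => some (false, Expr.top)
  | interL _ _ e f => some (false, Expr.inter e f)
  | muL _ _ e => some (false, Expr.mu e)
  | nuL _ _ e => some (false, Expr.nu e)
  | zeroR _ _ => some (true, Expr.zero)
  | plusR _ _ e f => some (true, Expr.plus e f)
  | topR _ _ => some (true, Expr.top)
  | interR _ _ e f => some (true, Expr.inter e f)
  | muR _ _ e => some (true, Expr.mu e)
  | nuR _ _ e => some (true, Expr.nu e)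
  | _ => none

/-- Immediate ancestry: `anc s i x y` holds when the formula `x` (with its side) in the
`i`-th premiss of `s` is an immediate ancestor of the formula `y` in the conclusion. -/
def anc : Step 𝒜 → ℕ → (Bool × Expr 𝒜) → (Bool × Expr 𝒜) → Prop
  | axPart _ _ _ _ _ _ _, _, _, _ => False
  | hmod a _ _ _, _, x, y => ∃ (b : Bool) (g : Expr 𝒜), x = (b, g) ∧ y = (b, Expr.letter a g)
  | partR _, i, x, y =>
      ∃ a : 𝒜, (Finset.univ.toList (α := 𝒜))[i]? = some a ∧
        ∃ g : Expr 𝒜, x = (true, g) ∧ y = (true, Expr.letter a g)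
  | weakL _ _ _, _, x, y => x = y
  | weakR _ _ _, _, x, y => x = y
  | zeroL _ _, _, x, y => x = y
  | plusL _ _ e f, i, x, y =>
      x = y ∨ (y = (false, Expr.plus e f) ∧
        ((i = 0 ∧ x = (false, e)) ∨ (i = 1 ∧ x = (false, f))))
  | topL _ _, _, x, y => x = y
  | interL _ _ e f, _, x, y =>
      x = y ∨ (y = (false, Expr.inter e f) ∧ (x = (false, e) ∨ x = (false, f)))
  | muL _ _ e, _, x, y =>
      x = y ∨ (y = (false, Expr.mu e) ∧ x = (false, Expr.subst0 (Expr.mu e) e))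
  | nuL _ _ e, _, x, y =>
      x = y ∨ (y = (false, Expr.nu e) ∧ x = (false, Expr.subst0 (Expr.nu e) e))
  | zeroR _ _, _, x, y => x = y
  | plusR _ _ e f, _, x, y =>
      x = y ∨ (y = (true, Expr.plus e f) ∧ (x = (true, e) ∨ x = (true, f)))
  | topR _ _, _, x, y => x = y
  | interR _ _ e f, i, x, y =>
      x = y ∨ (y = (true, Expr.inter e f) ∧
        ((i = 0 ∧ x = (true, e)) ∨ (i = 1 ∧ x = (true, f))))
  | muR _ _ e, _, x, y =>
      x = y ∨ (y = (true, Expr.mu e) ∧ x = (true, Expr.subst0 (Expr.mu e) e))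
  | nuR _ _ e, _, x, y =>
      x = y ∨ (y = (true, Expr.nu e) ∧ x = (true, Expr.subst0 (Expr.nu e) e))

end Step

/-- The formula `x` (with side) occurs in the sequent `S`. -/
def memSeq (x : Bool × Expr 𝒜) (S : Sequent 𝒜) : Prop :=
  if x.1 then x.2 ∈ S.2 else x.2 ∈ S.1

/-- `τ` is a trace starting at depth `k` along a branch given by steps `s` and premiss
choices `d` : `τ i` occurs in the sequent at depth `k+i` and `τ (i+1)` is an immediate
ancestor of `τ i`. -/
def IsTraceAlong (s : ℕ → Step 𝒜) (d : ℕ → ℕ) (k : ℕ) (τ : ℕ → Bool × Expr 𝒜) : Prop :=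
  (∀ i, memSeq (τ i) (Step.concl (s (k + i)))) ∧
  (∀ i, Step.anc (s (k + i)) (d (k + i)) (τ (i + 1)) (τ i))

/-- The trace formula is principal at stage `i`. -/
def PrincAt (s : ℕ → Step 𝒜) (k : ℕ) (τ : ℕ → Bool × Expr 𝒜) (i : ℕ) : Prop :=
  Step.principal (s (k + i)) = some (τ i)

/-- `g` occurs infinitely often principally along the trace `τ`. -/
def InfOftenPrinc (s : ℕ → Step 𝒜) (k : ℕ) (τ : ℕ → Bool × Expr 𝒜) (g : Expr 𝒜) : Prop :=
  ∀ N, ∃ i, N ≤ i ∧ (τ i).2 = g ∧ PrincAt s k τ i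

/-- A progressing trace along a branch: infinitely often principal, and either an LHS
trace whose smallest infinitely often principal formula is a `μ`-formula, or an RHS
trace whose smallest infinitely often principal formula is a `ν`-formula. -/
def ProgressingTrace (s : ℕ → Step 𝒜) (d : ℕ → ℕ) (k : ℕ) (τ : ℕ → Bool × Expr 𝒜) : Prop :=
  IsTraceAlong s d k τ ∧ (∀ N, ∃ i, N ≤ i ∧ PrincAt s k τ i) ∧
  (((∀ i, (τ i).1 = false) ∧ ∃ g, InfOftenPrinc s k τ g ∧ IsMu g ∧
      ∀ g', InfOftenPrinc s k τ g' → Subformula g g') ∨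
   ((∀ i, (τ i).1 = true) ∧ ∃ g, InfOftenPrinc s k τ g ∧ IsNu g ∧
      ∀ g', InfOftenPrinc s k τ g' → Subformula g g'))

/-- A branch (given by its steps and premiss choices) has a progressing trace. -/
def ProgressingAlong (s : ℕ → Step 𝒜) (d : ℕ → ℕ) : Prop :=
  ∃ k τ, ProgressingTrace s d k τ

/-- Preproofs: possibly infinite trees, coinductively generated by the rules of
`LRLL̂_L`, here represented by their labelling function on tree positions. -/
structure Preproof (𝒜 : Type) [Fintype 𝒜] [DecidableEq 𝒜] : Type where
  /-- the step at each node of the tree (`none` = no node) -/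
  label : List ℕ → Option (Step 𝒜)
  root_isSome : (label []).isSome
  /-- the children of a node are exactly the premisses of its step -/
  child : ∀ p s, label p = some s → ∀ i : ℕ,
      (Step.prems s)[i]? = Option.map Step.concl (label (p ++ [i]))
  outside : ∀ p, label p = none → ∀ i, label (p ++ [i]) = none

namespace Preproof

/-- The subtree rooted at a position. -/
def subtreeAt (P : Preproof 𝒜) (p : List ℕ) : List ℕ → Option (Step 𝒜) :=
  fun q => P.label (p ++ q)

/-- A preproof is regular (cyclic) if it has only finitely many distinct subtrees. -/
def Regular (P : Preproof 𝒜) : Prop :=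
  Set.Finite {t : List ℕ → Option (Step 𝒜) | ∃ p, (P.label p).isSome ∧ t = P.subtreeAt p}

/-- `P` is a preproof of the sequent `S`. -/
def IsProofOf (P : Preproof 𝒜) (S : Sequent 𝒜) : Prop :=
  ∃ s, P.label [] = some s ∧ Step.concl s = S

/-- A preproof is progressing if every infinite branch carries a progressing trace. -/
def Progressing (P : Preproof 𝒜) : Prop :=
  ∀ (b : ℕ → ℕ) (s : ℕ → Step 𝒜),
    (∀ n, P.label ((List.range n).map b) = some (s n)) → ProgressingAlong s b

end Preproof

/-- `CRLL_L ⊢ S` : there is a regular progressing preproof of `S`. -/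
def CRLLProves (S : Sequent 𝒜) : Prop :=
  ∃ P : Preproof 𝒜, P.IsProofOf S ∧ P.Regular ∧ P.Progressing

/-- Validity of a sequent in the language model: `⋂_{e∈Γ} L(e) ⊆ ⋃_{f∈Δ} L(f)`. -/
def SeqValid (S : Sequent 𝒜) : Prop :=
  (⋂ e ∈ (S.1 : Set (Expr 𝒜)), Lang0 e) ⊆ ⋃ f ∈ (S.2 : Set (Expr 𝒜)), Lang0 f

end RLL
namespace RLL

section Aux

variable {𝒜 : Type}

theorem lang_rename (e : Expr 𝒜) : ∀ (f : ℕ → ℕ) (ρ : ℕ → OLang 𝒜),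
    lang ρ (Expr.rename f e) = lang (fun n => ρ (f n)) e := by
  induction e with
  | var n => intros; rfl
  | letter a e ih => intro f ρ; simp only [Expr.rename, lang, ih]
  | zero => intros; rfl
  | plus e g ihe ihg => intro f ρ; simp only [Expr.rename, lang, ihe, ihg]
  | top => intros; rfl
  | inter e g ihe ihg => intro f ρ; simp only [Expr.rename, lang, ihe, ihg]
  | mu e ih =>
    intro f ρ
    show Set.sInter _ = Set.sInter _
    apply congrArg Set.sInter
    ext A
    simp only [Set.mem_setOf_eq, ih]
    refine iff_of_eq (congrArg (fun B => B ⊆ A)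
      (congrArg (fun ρ' => lang ρ' e) (funext fun n => ?_)))
    cases n <;> rfl
  | nu e ih =>
    intro f ρ
    show Set.sUnion _ = Set.sUnion _
    apply congrArg Set.sUnion
    ext A
    simp only [Set.mem_setOf_eq, ih]
    refine iff_of_eq (congrArg (fun B => A ⊆ B)
      (congrArg (fun ρ' => lang ρ' e) (funext fun n => ?_)))
    cases n <;> rfl

theorem lang_subst (e : Expr 𝒜) : ∀ (σ : ℕ → Expr 𝒜) (ρ : ℕ → OLang 𝒜),
    lang ρ (Expr.subst σ e) = lang (fun n => lang ρ (σ n)) e := by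
  induction e with
  | var n => intros; rfl
  | letter a e ih => intro σ ρ; simp only [Expr.subst, lang, ih]
  | zero => intros; rfl
  | plus e g ihe ihg => intro σ ρ; simp only [Expr.subst, lang, ihe, ihg]
  | top => intros; rfl
  | inter e g ihe ihg => intro σ ρ; simp only [Expr.subst, lang, ihe, ihg]
  | mu e ih =>
    intro σ ρ
    show Set.sInter _ = Set.sInter _
    apply congrArg Set.sInter
    ext A
    simp only [Set.mem_setOf_eq, ih]
    refine iff_of_eq (congrArg (fun B => B ⊆ A)
      (congrArg (fun ρ' => lang ρ' e) (funext fun n => ?_)))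
    cases n with
    | zero => rfl
    | succ m =>
      show lang (consEnv A ρ) (Expr.rename Nat.succ (σ m)) = lang ρ (σ m)
      rw [lang_rename]
      rfl
  | nu e ih =>
    intro σ ρ
    show Set.sUnion _ = Set.sUnion _
    apply congrArg Set.sUnion
    ext A
    simp only [Set.mem_setOf_eq, ih]
    refine iff_of_eq (congrArg (fun B => A ⊆ B)
      (congrArg (fun ρ' => lang ρ' e) (funext fun n => ?_)))
    cases n with
    | zero => rfl
    | succ m =>
      show lang (consEnv A ρ) (Expr.rename Nat.succ (σ m)) = lang ρ (σ m)
      rw [lang_rename]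
      rfl

theorem lang_subst0 (e f : Expr 𝒜) (ρ : ℕ → OLang 𝒜) :
    lang ρ (Expr.subst0 f e) = lang (consEnv (lang ρ f) ρ) e := by
  rw [Expr.subst0, lang_subst]
  exact congrArg (fun ρ' => lang ρ' e) (funext fun n => by cases n <;> rfl)

theorem lang_mono (e : Expr 𝒜) : ∀ (ρ ρ' : ℕ → OLang 𝒜), (∀ n, ρ n ⊆ ρ' n) →
    lang ρ e ⊆ lang ρ' e := by
  induction e with
  | var n => intro ρ ρ' h; exact h n
  | letter a e ih =>
    intro ρ ρ' h w hw
    exact ⟨hw.1, ih _ _ h hw.2⟩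
  | zero => intro ρ ρ' _; exact Set.Subset.rfl
  | plus e g ihe ihg => intro ρ ρ' h; exact Set.union_subset_union (ihe _ _ h) (ihg _ _ h)
  | top => intro ρ ρ' _; exact Set.Subset.rfl
  | inter e g ihe ihg => intro ρ ρ' h; exact Set.inter_subset_inter (ihe _ _ h) (ihg _ _ h)
  | mu e ih =>
    intro ρ ρ' h
    apply Set.sInter_subset_sInter
    intro A hA
    refine Set.Subset.trans ?_ hA
    apply ih
    intro n; cases n with
    | zero => exact Set.Subset.rfl
    | succ m => exact h m
  | nu e ih =>
    intro ρ ρ' h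
    apply Set.sUnion_subset_sUnion
    intro A hA
    refine Set.Subset.trans hA ?_
    apply ih
    intro n; cases n with
    | zero => exact Set.Subset.rfl
    | succ m => exact h m

theorem consEnv_mono (e : Expr 𝒜) (ρ : ℕ → OLang 𝒜) :
    Monotone (fun A => lang (consEnv A ρ) e) := by
  intro A B hAB
  apply lang_mono
  intro n; cases n with
  | zero => exact hAB
  | succ m => exact Set.Subset.rfl

theorem lang_mu_unfold (e : Expr 𝒜) (ρ : ℕ → OLang 𝒜) :
    lang (consEnv (lang ρ (Expr.mu e)) ρ) e = lang ρ (Expr.mu e) := by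
  have h : lang ρ (Expr.mu e)
      = OrderHom.lfp ⟨fun A => lang (consEnv A ρ) e, consEnv_mono e ρ⟩ := rfl
  conv_lhs => rw [h]
  conv_rhs => rw [h]
  exact OrderHom.map_lfp ⟨fun A => lang (consEnv A ρ) e, consEnv_mono e ρ⟩

theorem lang_nu_unfold (e : Expr 𝒜) (ρ : ℕ → OLang 𝒜) :
    lang (consEnv (lang ρ (Expr.nu e)) ρ) e = lang ρ (Expr.nu e) := by
  have h : lang ρ (Expr.nu e)
      = OrderHom.gfp ⟨fun A => lang (consEnv A ρ) e, consEnv_mono e ρ⟩ := rfl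
  conv_lhs => rw [h]
  conv_rhs => rw [h]
  exact OrderHom.map_gfp ⟨fun A => lang (consEnv A ρ) e, consEnv_mono e ρ⟩

theorem Lang0_mu_unfold (e : Expr 𝒜) :
    Lang0 (Expr.subst0 (Expr.mu e) e) = Lang0 (Expr.mu e) := by
  rw [Lang0, Lang0, lang_subst0, lang_mu_unfold]

theorem Lang0_nu_unfold (e : Expr 𝒜) :
    Lang0 (Expr.subst0 (Expr.nu e) e) = Lang0 (Expr.nu e) := by
  rw [Lang0, Lang0, lang_subst0, lang_nu_unfold]

theorem Lang0_letter (a : 𝒜) (e : Expr 𝒜) :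
    Lang0 (Expr.letter a e) = {w : Word 𝒜 | w 0 = a ∧ wtail w ∈ Lang0 e} := rfl

end Aux

/-- **Local soundness.** Each rule of `LRLL̂_L` is sound for the
language model: for each inference step (with closed expressions), if every premiss is
valid then so is the conclusion. -/
theorem local_soundness {𝒜 : Type} [Fintype 𝒜] [DecidableEq 𝒜] (s : Step 𝒜)
    (hclosed : ∀ g : Expr 𝒜,
      (g ∈ (Step.concl s).1 ∨ g ∈ (Step.concl s).2 ∨
        ∃ S ∈ Step.prems s, g ∈ S.1 ∨ g ∈ S.2) → g.Closed)
    (hprem : ∀ S ∈ Step.prems s, SeqValid S) :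
    SeqValid (Step.concl s) := by
  clear hclosed
  cases s with
  | axPart Γ Δ a b e f hab =>
    intro w hw
    simp only [Step.concl, Finset.coe_insert, Set.biInter_insert] at hw
    exact absurd (hw.1.1.symm.trans hw.2.1.1) hab
  | hmod a Γ Δ hne =>
    intro w hw
    simp only [Step.concl, Finset.coe_image, Set.mem_iInter, Set.mem_iUnion] at hw ⊢
    obtain ⟨g0, hg0⟩ := hne
    have hwa : w 0 = a := (hw _ (Set.mem_image_of_mem _ hg0)).1
    have htail : wtail w ∈ ⋂ e ∈ (Γ : Set (Expr 𝒜)), Lang0 e := by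
      simp only [Set.mem_iInter]
      intro g hg
      exact (hw _ (Set.mem_image_of_mem _ hg)).2
    have := hprem (Γ, Δ) (by simp [Step.prems]) htail
    simp only [Set.mem_iUnion] at this
    obtain ⟨f, hf, hwf⟩ := this
    exact ⟨Expr.letter a f, Set.mem_image_of_mem _ hf, hwa, hwf⟩
  | partR Γs =>
    intro w _
    have hmem : ((∅ : Finset (Expr 𝒜)), Γs (w 0)) ∈ Step.prems (Step.partR (𝒜 := 𝒜) Γs) := by
      simp only [Step.prems, List.mem_map]
      exact ⟨w 0, by simp, rfl⟩
    have h1 : wtail w ∈ ⋃ f ∈ ((Γs (w 0) : Finset (Expr 𝒜)) : Set (Expr 𝒜)), Lang0 f := by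
      apply hprem _ hmem
      simp
    simp only [Set.mem_iUnion] at h1
    obtain ⟨g, hg, hwg⟩ := h1
    simp only [Step.concl, Set.mem_iUnion]
    refine ⟨Expr.letter (w 0) g, ?_, rfl, hwg⟩
    simp only [Finset.coe_biUnion, Finset.coe_image, Finset.mem_coe, Finset.mem_univ,
      Set.iUnion_true, Set.mem_iUnion, Finset.coe_univ, Set.mem_image]
    exact ⟨w 0, trivial, g, hg, rfl⟩
  | weakL Γ Δ e =>
    intro w hw
    simp only [Step.concl, Finset.coe_insert, Set.biInter_insert] at hw
    exact hprem (Γ, Δ) (by simp [Step.prems]) hw.2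
  | weakR Γ Δ e =>
    intro w hw
    have := hprem (Γ, Δ) (by simp [Step.prems]) hw
    simp only [Step.concl, Finset.coe_insert, Set.biUnion_insert]
    exact Set.mem_union_right _ this
  | zeroL Γ Δ =>
    intro w hw
    simp only [Step.concl, Finset.coe_insert, Set.biInter_insert] at hw
    exact absurd hw.1 (Set.notMem_empty w)
  | plusL Γ Δ e f =>
    intro w hw
    simp only [Step.concl, Finset.coe_insert, Set.biInter_insert] at hw
    rcases hw.1 with h | h
    · exact hprem (insert e Γ, Δ) (by simp [Step.prems])
        (by simp only [Finset.coe_insert, Set.biInter_insert]; exact ⟨h, hw.2⟩)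
    · exact hprem (insert f Γ, Δ) (by simp [Step.prems])
        (by simp only [Finset.coe_insert, Set.biInter_insert]; exact ⟨h, hw.2⟩)
  | topL Γ Δ =>
    intro w hw
    simp only [Step.concl, Finset.coe_insert, Set.biInter_insert] at hw
    exact hprem (Γ, Δ) (by simp [Step.prems]) hw.2
  | interL Γ Δ e f =>
    intro w hw
    simp only [Step.concl, Finset.coe_insert, Set.biInter_insert] at hw
    exact hprem (insert e (insert f Γ), Δ) (by simp [Step.prems])
      (by simp only [Finset.coe_insert, Set.biInter_insert]
          exact ⟨hw.1.1, hw.1.2, hw.2⟩)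
  | muL Γ Δ e =>
    intro w hw
    simp only [Step.concl, Finset.coe_insert, Set.biInter_insert] at hw
    refine hprem (insert (Expr.subst0 (Expr.mu e) e) Γ, Δ) (by simp [Step.prems]) ?_
    simp only [Finset.coe_insert, Set.biInter_insert]
    rw [Lang0_mu_unfold]
    exact hw
  | nuL Γ Δ e =>
    intro w hw
    simp only [Step.concl, Finset.coe_insert, Set.biInter_insert] at hw
    refine hprem (insert (Expr.subst0 (Expr.nu e) e) Γ, Δ) (by simp [Step.prems]) ?_
    simp only [Finset.coe_insert, Set.biInter_insert]
    rw [Lang0_nu_unfold]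
    exact hw
  | zeroR Γ Δ =>
    intro w hw
    have := hprem (Γ, Δ) (by simp [Step.prems]) hw
    simp only [Step.concl, Finset.coe_insert, Set.biUnion_insert]
    exact Set.mem_union_right _ this
  | plusR Γ Δ e f =>
    intro w hw
    have := hprem (Γ, insert e (insert f Δ)) (by simp [Step.prems]) hw
    simp only [Step.concl, Finset.coe_insert, Set.biUnion_insert, Set.mem_union] at this ⊢
    rcases this with h | h | h
    · exact Or.inl (Or.inl h)
    · exact Or.inl (Or.inr h)
    · exact Or.inr h
  | topR Γ Δ =>
    intro w _
    simp only [Step.concl, Finset.coe_insert, Set.biUnion_insert]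
    exact Set.mem_union_left _ trivial
  | interR Γ Δ e f =>
    intro w hw
    have h1 := hprem (Γ, insert e Δ) (by simp [Step.prems]) hw
    have h2 := hprem (Γ, insert f Δ) (by simp [Step.prems]) hw
    simp only [Step.concl, Finset.coe_insert, Set.biUnion_insert, Set.mem_union] at h1 h2 ⊢
    rcases h1 with h1 | h1
    · rcases h2 with h2 | h2
      · exact Or.inl ⟨h1, h2⟩

      · exact Or.inr h2
    · exact Or.inr h1
  | muR Γ Δ e =>
    intro w hw
    have := hprem (Γ, insert (Expr.subst0 (Expr.mu e) e) Δ) (by simp [Step.prems]) hw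
    simp only [Step.concl, Finset.coe_insert, Set.biUnion_insert, Set.mem_union] at this ⊢
    rwa [Lang0_mu_unfold] at this
  | nuR Γ Δ e =>
    intro w hw
    have := hprem (Γ, insert (Expr.subst0 (Expr.nu e) e) Δ) (by simp [Step.prems]) hw
    simp only [Step.concl, Finset.coe_insert, Set.biUnion_insert, Set.mem_union] at this ⊢
    rwa [Lang0_nu_unfold] at this

end RLL
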